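/- For every positive integer n, tree-α(L(K_n)) = α(L(K_n)) = ⌊n/2⌋, where K_n is the complete graph on n vertices. -/

import Mathlib

/-
Common definitions: tree decompositions, tree-independence number, treewidth,
independence/clique numbers, induced-subgraph freeness, and the special graphs
appearing in the paper "Treewidth versus clique number: induced minors,
distance to block graphs ... (tree-independence number)".
-/

namespace PaperTIN

open SimpleGraph

variable {V W : Type}

/-- A set of vertices is independent if no two of its members are adjacent. -/
def IsIndepSet (G : SimpleGraph V) (s : Set V) : Prop :=
  s.Pairwise fun u v => ¬ G.Adj u v

/-- The maximum size of an independent set of `G` contained in `s`,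
i.e. the independence number `α(G[s])` of the induced subgraph `G[s]`. -/
noncomputable def indepNumOn (G : SimpleGraph V) (s : Set V) : ℕ :=
  sSup {n | ∃ t : Finset V, ↑t ⊆ s ∧ IsIndepSet G ↑t ∧ t.card = n}

/-- The independence number `α(G)`. -/
noncomputable def indepNum (G : SimpleGraph V) : ℕ :=
  indepNumOn G Set.univ

/-- The maximum size of a clique of `G` contained in `s`,
i.e. the clique number `ω(G[s])` of the induced subgraph `G[s]`. -/
noncomputable def cliqueNumOn (G : SimpleGraph V) (s : Set V) : ℕ :=
  sSup {n | ∃ t : Finset V, ↑t ⊆ s ∧ G.IsClique ↑t ∧ t.card = n}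

/-- A tree decomposition of a graph `G`: a tree together with a bag for each node,
such that every vertex is in some bag, both endpoints of every edge lie in a common
bag, and for every vertex the set of nodes whose bag contains it induces a connected
(hence nonempty) subtree of the tree. -/
structure TreeDecomp {V : Type} (G : SimpleGraph V) where
  ι : Type
  tree : SimpleGraph ι
  isTree : tree.IsTree
  bag : ι → Set V
  bag_vert : ∀ v : V, ∃ t : ι, v ∈ bag t
  bag_edge : ∀ ⦃u v : V⦄, G.Adj u v → ∃ t : ι, u ∈ bag t ∧ v ∈ bag t
  bag_conn : ∀ v : V, (tree.induce {t : ι | v ∈ bag t}).Connected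

/-- The independence number of a tree decomposition: the maximum, over all bags,
of the independence number of the subgraph induced by the bag. -/
noncomputable def TreeDecomp.alpha {G : SimpleGraph V} (D : TreeDecomp G) : ℕ :=
  sSup {n | ∃ t : D.ι, n = indepNumOn G (D.bag t)}

/-- The tree-independence number `tree-α(G)`: the minimum independence number of a
tree decomposition of `G`. -/
noncomputable def treeIndepNum (G : SimpleGraph V) : ℕ :=
  sInf {n | ∃ D : TreeDecomp G, D.alpha = n}

/-- The width of a tree decomposition: maximum bag size minus one. -/
noncomputable def TreeDecomp.width {G : SimpleGraph V} (D : TreeDecomp G) : ℕ :=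
  sSup {n | ∃ t : D.ι, n = (D.bag t).ncard} - 1

/-- The treewidth `tw(G)`: the minimum width of a tree decomposition of `G`. -/
noncomputable def treewidth (G : SimpleGraph V) : ℕ :=
  sInf {n | ∃ D : TreeDecomp G, D.width = n}

/-- `Free H G` means that `G` has no induced subgraph isomorphic to `H`
(equivalently, there is no graph embedding of `H` into `G`). -/
def Free (H : SimpleGraph W) (G : SimpleGraph V) : Prop :=
  IsEmpty (H ↪g G)

/-- The star `K_{1,d}` with `d` leaves. -/
def star (d : ℕ) : SimpleGraph (Fin 1 ⊕ Fin d) :=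
  completeBipartiteGraph (Fin 1) (Fin d)

/-- The complete bipartite graph `K_{m,n}`. -/
def biclique (m n : ℕ) : SimpleGraph (Fin m ⊕ Fin n) :=
  completeBipartiteGraph (Fin m) (Fin n)

/-- The open neighborhood `N(X)` of a set of vertices: all vertices having a neighbor in `X`. -/
def nbhdSet (G : SimpleGraph V) (X : Set V) : Set V :=
  {v | ∃ x ∈ X, G.Adj x v}

/-- The closed neighborhood `N[X]` of a set of vertices. -/
def closedNbhdSet (G : SimpleGraph V) (X : Set V) : Set V :=
  X ∪ nbhdSet G X

/-- `S_p`: the tree obtained from the claw `K_{1,3}` by subdividing each edge exactly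
`p-1` times; equivalently a spider with three legs, each a path on `p` vertices,
attached to a center vertex. -/
def spider (p : ℕ) : SimpleGraph (Unit ⊕ Fin 3 × Fin p) :=
  SimpleGraph.fromRel fun a b =>
    (∃ j : Fin 3, ∃ i : Fin p, a = Sum.inl () ∧ b = Sum.inr (j, i) ∧ (i : ℕ) = 0) ∨
    (∃ j : Fin 3, ∃ i i' : Fin p, a = Sum.inr (j, i) ∧ b = Sum.inr (j, i') ∧
      (i' : ℕ) = (i : ℕ) + 1)

/-- The disjoint union of `k` copies of a graph `H`. -/
def kCopies (k : ℕ) (H : SimpleGraph W) : SimpleGraph (Fin k × W) where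
  Adj a b := a.1 = b.1 ∧ H.Adj a.2 b.2
  symm := ⟨by rintro a b ⟨h1, h2⟩; exact ⟨h1.symm, h2.symm⟩⟩
  loopless := ⟨by rintro a ⟨-, h⟩; exact H.loopless.irrefl _ h⟩

/-- Membership in the family `𝒮`: every connected component is a tree with at most three
leaves. Equivalently, the graph is a forest and each connected component contains at most
three vertices of degree one. -/
def InS [Fintype W] (S : SimpleGraph W) : Prop :=
  S.IsAcyclic ∧ ∀ c : S.ConnectedComponent,
    {v : W | S.connectedComponentMk v = c ∧ (S.neighborSet v).ncard = 1}.ncard ≤ 3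

/-- Membership in the family `L(𝒮)`: the graph is isomorphic to the line graph of some
member of `𝒮`. -/
def InLS [Fintype V] (T : SimpleGraph V) : Prop :=
  ∃ (W : Type) (_ : Fintype W) (S : SimpleGraph W),
    InS S ∧ Nonempty (T ≃g S.lineGraph)

/-- The induced biclique number of `G`: the largest `n` such that `G` contains an
induced subgraph isomorphic to `K_{n,n}`. -/
noncomputable def ibn (G : SimpleGraph V) : ℕ :=
  sSup {n | Nonempty (completeBipartiteGraph (Fin n) (Fin n) ↪g G)}

/-- The `i`-th bag (0-indexed) of the `h`-backbone structure of an induced path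
`f : P_ℓ ↪g G`: the closed neighborhood of the set of vertices
`{v_i, …, v_{i+h-1}}` of the path. -/
def backboneBag (G : SimpleGraph V) {ℓ : ℕ} (f : pathGraph ℓ ↪g G) (h i : ℕ) : Set V :=
  closedNbhdSet G (⇑f '' {j : Fin ℓ | i ≤ (j : ℕ) ∧ (j : ℕ) ≤ i + h - 1})

/-- The vertex set (as a set of vertices of the ambient graph) of a connected component
of the induced subgraph `G[s]`. -/
def componentVerts {G : SimpleGraph V} {s : Set V}
    (C : (G.induce s).ConnectedComponent) : Set V :=
  Subtype.val '' {w : s | (G.induce s).connectedComponentMk w = C}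

/-!
`α(L(K_n))` is the maximum size of a matching of `K_n`, that is `⌊n/2⌋`, and the decomposition
with a single bag gives `tree-α ≤ α`. Conversely, let `(T, β)` be a tree decomposition of
`L(K_n)`. For each vertex `v` of `K_n` the edges at `v` form a clique of `L(K_n)`, so by the
Helly property of subtrees a single node `pt v` has all of them in its bag. Let `t` be a centroid
of the points `pt v`: no component of `T - t` contains more than `n/2` of them. The vertices of
`K_n` can then be split into `⌊n/2⌋` disjoint pairs `{u, w}` such that `t` separates `pt u` from
`pt w` (or is one of them). The nodes whose bags contain the edge `uw` form a subtree containing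
`pt u` and `pt w`, hence `t`, so the bag of `t` contains a matching of size `⌊n/2⌋`.
-/

open Finset Function

section PathConvexity

variable {ι : Type} {T : SimpleGraph ι}

def PathConvex (T : SimpleGraph ι) (S : Set ι) : Prop :=
  ∀ ⦃a⦄, a ∈ S → ∀ ⦃b⦄, b ∈ S → ∀ p : T.Walk a b, p.IsPath → ∀ x ∈ p.support, x ∈ S

lemma PathConvex.inter {S S' : Set ι} (h : PathConvex T S) (h' : PathConvex T S') :
    PathConvex T (S ∩ S') :=
  fun _ ha _ hb p hp x hx => ⟨h ha.1 hb.1 p hp x hx, h' ha.2 hb.2 p hp x hx⟩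

lemma pathConvex_of_preconnected (hT : T.IsAcyclic) {S : Set ι}
    (hS : (T.induce S).Preconnected) : PathConvex T S := by
  classical
  intro a ha b hb p hp x hx
  obtain ⟨w⟩ := hS ⟨a, ha⟩ ⟨b, hb⟩
  set w' := w.map (Embedding.induce S).toHom
  have hpw : p = w'.bypass :=
    congrArg Subtype.val ((hT.subsingleton_path a b).elim ⟨p, hp⟩ ⟨_, w'.bypass_isPath⟩)
  have hxw := w'.support_bypass_subset_support (hpw ▸ hx)
  simp only [w', Walk.support_map, List.mem_map] at hxw
  obtain ⟨y, -, rfl⟩ := hxw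
  exact y.2

lemma PathConvex.exists_walk_not_mem (hT : T.Connected) {S : Set ι} (hS : PathConvex T S)
    {a b t : ι} (ha : a ∈ S) (hb : b ∈ S) (ht : t ∉ S) : ∃ p : T.Walk a b, t ∉ p.support := by
  obtain ⟨p, hp⟩ := (hT a b).exists_isPath
  exact ⟨p, fun h => ht (hS ha hb p hp t h)⟩

lemma exists_eq_append_first_mem (Z : Set ι) : ∀ {c a : ι} (w : T.Walk c a), a ∈ Z →
    ∃ m ∈ Z, ∃ (q : T.Walk c m) (r : T.Walk m a),
      w = q.append r ∧ ∀ x ∈ q.support, x ∈ Z → x = m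
  | _, _, .nil, ha => ⟨_, ha, .nil, .nil, rfl, by simp⟩
  | c, _, .cons h w, ha => by
    by_cases hc : c ∈ Z
    · exact ⟨c, hc, .nil, .cons h w, rfl, by simp⟩
    · obtain ⟨m, hm, q, r, rfl, hq⟩ := exists_eq_append_first_mem Z w ha
      refine ⟨m, hm, .cons h q, r, rfl, ?_⟩
      simp only [Walk.support_cons, List.mem_cons, forall_eq_or_imp]
      exact ⟨fun h => absurd h hc, hq⟩

lemma PathConvex.inter_inter_nonempty (hT : T.Connected) {S₁ S₂ S₃ : Set ι}
    (h₁ : PathConvex T S₁) (h₂ : PathConvex T S₂) (h₃ : PathConvex T S₃)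
    (h₁₂ : (S₁ ∩ S₂).Nonempty) (h₂₃ : (S₂ ∩ S₃).Nonempty) (h₃₁ : (S₃ ∩ S₁).Nonempty) :
    (S₁ ∩ S₂ ∩ S₃).Nonempty := by
  obtain ⟨a, ha₁, ha₂⟩ := h₁₂
  obtain ⟨b, hb₂, hb₃⟩ := h₂₃
  obtain ⟨c, hc₃, hc₁⟩ := h₃₁
  obtain ⟨P, hP⟩ := (hT a b).exists_isPath
  obtain ⟨Q, hQ⟩ := (hT c a).exists_isPath
  -- the first vertex `m` of the path `c ⟶ a` on the path `a ⟶ b` lies on all three paths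
  obtain ⟨m, hmP, q, _, rfl, hfirst⟩ :=
    exists_eq_append_first_mem {x | x ∈ P.support} Q P.start_mem_support
  obtain ⟨_, r, -, hr, rfl⟩ := hP.mem_support_iff_exists_append.mp hmP
  have hqr : (q.append r).IsPath := by
    have hr' := hr.support_nodup
    rw [← Walk.cons_tail_support, List.nodup_cons] at hr'
    rw [Walk.isPath_def, Walk.support_append]
    refine hQ.of_append_left.support_nodup.append hr'.2 fun x hxq hxr => ?_
    obtain rfl := hfirst x hxq (by simp [List.mem_of_mem_tail hxr])
    exact hr'.1 hxr
  exact ⟨m, ⟨h₁ hc₁ ha₁ _ hQ m (by simp), h₂ ha₂ hb₂ _ hP m hmP⟩, h₃ hc₃ hb₃ _ hqr m (by simp)⟩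

lemma PathConvex.exists_forall_mem {κ : Type} (hT : T.Connected) (F : Finset κ)
    {S : κ → Set ι} (hS : ∀ i ∈ F, PathConvex T (S i))
    (hF : ∀ i ∈ F, ∀ j ∈ F, (S i ∩ S j).Nonempty) : ∃ x, ∀ i ∈ F, x ∈ S i := by
  classical
  induction F using Finset.induction_on generalizing S with
  | empty => exact ⟨hT.nonempty.some, by simp⟩
  | insert j F _ ih =>
    have hSj := hS j (mem_insert_self j F)
    rcases F.eq_empty_or_nonempty with rfl | ⟨k, hk⟩
    · obtain ⟨x, hx, -⟩ := hF j (mem_insert_self j ∅) j (mem_insert_self j ∅)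
      exact ⟨x, by simpa using hx⟩
    obtain ⟨x, hx⟩ := ih (S := fun i => S i ∩ S j)
      (fun i hi => (hS i (mem_insert_of_mem hi)).inter hSj) fun i hi i' hi' => by
        have hi₁ : i ∈ insert j F := mem_insert_of_mem hi
        have hi₂ : i' ∈ insert j F := mem_insert_of_mem hi'
        refine (inter_inter_nonempty hT (hS i hi₁) (hS i' hi₂) hSj (hF i hi₁ i' hi₂)
          (hF i' hi₂ j (mem_insert_self j F)) (hF j (mem_insert_self j F) i hi₁)).mono ?_
        rintro y ⟨⟨hy, hy'⟩, hyj⟩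
        exact ⟨⟨hy, hyj⟩, hy', hyj⟩
    refine ⟨x, ?_⟩
    simp only [forall_mem_insert]
    exact ⟨(hx k hk).2, fun i hi => (hx i hi).1⟩

end PathConvexity

section Centroid

variable {ι α : Type} {T : SimpleGraph ι}

lemma length_eq_dist_of_isPath (hT : T.IsAcyclic) {a b : ι} {p : T.Walk a b} (hp : p.IsPath) :
    p.length = T.dist a b := by
  obtain ⟨q, hq, hlen⟩ := p.reachable.exists_path_of_dist
  have hpq : p = q := congrArg Subtype.val ((hT.subsingleton_path a b).elim ⟨p, hp⟩ ⟨q, hq⟩)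
  rw [hpq, hlen]

lemma dist_eq_dist_add_one_of_walk (hT : T.IsAcyclic) {t t' y : ι} (hadj : T.Adj t t')
    (w : T.Walk t' y) (ht : t ∉ w.support) : T.dist t y = T.dist t' y + 1 := by
  classical
  have hpath : (Walk.cons hadj w.bypass).IsPath :=
    w.bypass_isPath.cons fun h => ht (w.support_bypass_subset_support h)
  rw [← length_eq_dist_of_isPath hT hpath, ← length_eq_dist_of_isPath hT w.bypass_isPath,
    Walk.length_cons]

lemma sum_dist_add_two_mul_card_le [Fintype α] (hT : T.IsTree) (pt : α → ι) {t t' : ι}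
    (hadj : T.Adj t t') {C : Finset α} (hC : ∀ v ∈ C, ∃ p : T.Walk t' (pt v), t ∉ p.support) :
    ∑ v, T.dist t' (pt v) + 2 * #C ≤ ∑ v, T.dist t (pt v) + Fintype.card α := by
  classical
  have hnear : ∀ v ∈ C, T.dist t (pt v) = T.dist t' (pt v) + 1 := fun v hv => by
    obtain ⟨p, hp⟩ := hC v hv
    exact dist_eq_dist_add_one_of_walk hT.isAcyclic hadj p hp
  have hfar : ∀ v, T.dist t' (pt v) ≤ T.dist t (pt v) + 1 := fun v => by
    have := hT.connected.dist_triangle (u := t') (v := t) (w := pt v)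
    rwa [dist_eq_one_iff_adj.mpr hadj.symm, add_comm] at this
  calc ∑ v, T.dist t' (pt v) + 2 * #C
      = ∑ v, (T.dist t' (pt v) + if v ∈ C then 2 else 0) := by
        rw [sum_add_distrib, sum_ite_mem, univ_inter, sum_const, smul_eq_mul, mul_comm]
    _ ≤ ∑ v, (T.dist t (pt v) + 1) := sum_le_sum fun v _ => by
        split_ifs with hv
        · rw [hnear v hv]
        · exact hfar v
    _ = ∑ v, T.dist t (pt v) + Fintype.card α := by
        rw [sum_add_distrib, sum_const, card_univ, smul_eq_mul, mul_one]

/-- Take `t` minimising the total distance to the points `pt v`: stepping from `t` into a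
component of `T - t` holding more than half of the points would decrease it. -/
lemma exists_centroid [Fintype α] (hT : T.IsTree) (pt : α → ι) :
    ∃ t, ∀ x (C : Finset α), (∀ v ∈ C, ∃ p : T.Walk x (pt v), t ∉ p.support) →
      2 * #C ≤ Fintype.card α := by
  have := hT.connected.nonempty
  obtain ⟨t, ht⟩ : ∃ t, ∀ y, ∑ v, T.dist t (pt v) ≤ ∑ v, T.dist y (pt v) :=
    ⟨_, fun y => Function.argmin_le (fun y => ∑ v, T.dist y (pt v)) y⟩
  refine ⟨t, fun x C hC => ?_⟩
  obtain ⟨p, hp⟩ := (hT.connected t x).exists_isPath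
  cases p with
  | nil =>
    obtain rfl : C = ∅ := eq_empty_of_forall_notMem fun v hv =>
      (hC v hv).elim fun p hp => hp p.start_mem_support
    simp
  | @cons _ t' _ hadj p =>
    have htp : t ∉ p.support := ((Walk.cons_isPath_iff _ _).mp hp).2
    have := sum_dist_add_two_mul_card_le hT pt hadj fun v hv =>
      (hC v hv).elim fun q hq => ⟨p.append q, by simp [Walk.mem_support_append_iff, htp, hq]⟩
    have := ht t'
    omega

/-- The `u = w` disjunct makes every point sent to `t` a class of its own. -/
def sameSide (T : SimpleGraph ι) (t : ι) (pt : α → ι) : Setoid α where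
  r u w := u = w ∨ ∃ p : T.Walk (pt u) (pt w), t ∉ p.support
  iseqv :=
    { refl := fun _ => Or.inl rfl
      symm := by
        rintro u w (rfl | ⟨p, hp⟩)
        · exact Or.inl rfl
        · exact Or.inr ⟨p.reverse, by simpa using hp⟩
      trans := by
        rintro u v w (rfl | ⟨p, hp⟩) (rfl | ⟨q, hq⟩)
        · exact Or.inl rfl
        · exact Or.inr ⟨q, hq⟩
        · exact Or.inr ⟨p, hp⟩
        · exact Or.inr ⟨p.append q, by simp [Walk.mem_support_append_iff, hp, hq]⟩ }

lemma exists_forall_two_mul_card_sameSide_le [Fintype α] (hT : T.IsTree) (pt : α → ι)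
    (hα : 2 ≤ Fintype.card α) :
    ∃ t, ∀ v (C : Finset α), (∀ w ∈ C, sameSide T t pt w v) → 2 * #C ≤ Fintype.card α := by
  obtain ⟨t, ht⟩ := exists_centroid hT pt
  refine ⟨t, fun v C hC => ?_⟩
  by_cases hv : pt v = t
  · have hsub : C ⊆ {v} := by
      intro w hw
      obtain rfl | ⟨p, hp⟩ := hC w hw
      · exact mem_singleton_self w
      · exact absurd (hv ▸ p.end_mem_support) hp
    have := card_le_card hsub
    rw [card_singleton] at this
    omega
  · refine ht (pt v) C fun w hw => ?_
    obtain rfl | ⟨p, hp⟩ := hC w hw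
    · exact ⟨.nil, by simpa [eq_comm] using hv⟩
    · exact ⟨p.reverse, by simpa using hp⟩

end Centroid

def lowerHalf (n : ℕ) (i : Fin (n / 2)) : Fin n := ⟨i, by omega⟩

def upperHalf (n : ℕ) (i : Fin (n / 2)) : Fin n := ⟨i + n / 2, by omega⟩

lemma injective_sumElim_lowerHalf_upperHalf (n : ℕ) :
    Injective (Sum.elim (lowerHalf n) (upperHalf n)) := by
  rintro (i | i) (j | j) h <;>
    simp only [Sum.elim_inl, Sum.elim_inr, lowerHalf, upperHalf, Fin.ext_iff, Sum.inl.injEq,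
      Sum.inr.injEq, reduceCtorEq] at h ⊢ <;> omega

/-- Sort the points so that every class is a block of consecutive positions; as no block is
longer than `n / 2`, the points at positions `i` and `i + n / 2` are never equivalent. -/
lemma exists_pairing {n : ℕ} (r : Setoid (Fin n))
    (hr : ∀ v (C : Finset (Fin n)), (∀ w ∈ C, r w v) → 2 * #C ≤ n) :
    ∃ f g : Fin (n / 2) → Fin n, Injective (Sum.elim f g) ∧ ∀ i, ¬ r (f i) (g i) := by
  let key : Fin n → Fin n := fun v => (Quotient.mk r v).out
  have hkey : ∀ v w, key v = key w ↔ r v w := fun v w => Quotient.out_inj.trans Quotient.eq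
  let σ := Tuple.sort key
  have hmono : Monotone (key ∘ σ) := Tuple.monotone_sort key
  refine ⟨σ ∘ lowerHalf n, σ ∘ upperHalf n, ?_, fun i hi => ?_⟩
  · rw [← Sum.comp_elim]
    exact σ.injective.comp (injective_sumElim_lowerHalf_upperHalf n)
  · set a := lowerHalf n i
    set b := upperHalf n i
    have hab : key (σ a) = key (σ b) := (hkey _ _).mpr hi
    have hblock : ∀ w ∈ (Icc a b).image σ, r w (σ a) := by
      intro w hw
      obtain ⟨j, hj, rfl⟩ := mem_image.mp hw
      rw [mem_Icc] at hj
      exact (hkey _ _).mp (le_antisymm (hab ▸ hmono hj.2) (hmono hj.1))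
    have hcard := hr (σ a) _ hblock
    rw [card_image_of_injective _ σ.injective, Fin.card_Icc] at hcard
    simp only [a, b, lowerHalf, upperHalf] at hcard
    omega

section IndependenceNumber

variable {G : SimpleGraph V}

lemma indepNumOn_le {s : Set V} {k : ℕ}
    (h : ∀ t : Finset V, ↑t ⊆ s → IsIndepSet G ↑t → #t ≤ k) : indepNumOn G s ≤ k :=
  csSup_le' (by rintro _ ⟨t, hts, ht, rfl⟩; exact h t hts ht)

lemma indepNumOn_le_card [Fintype V] (s : Set V) : indepNumOn G s ≤ Fintype.card V :=
  indepNumOn_le fun t _ _ => card_le_univ t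

lemma le_indepNumOn [Finite V] {s : Set V} {t : Finset V} (hts : ↑t ⊆ s)
    (ht : IsIndepSet G ↑t) : #t ≤ indepNumOn G s := by
  have := Fintype.ofFinite V
  exact le_csSup ⟨Fintype.card V, by rintro _ ⟨u, -, -, rfl⟩; exact card_le_univ u⟩
    ⟨t, hts, ht, rfl⟩

lemma two_mul_card_le_of_isIndepSet_lineGraph [Fintype V] {s : Finset G.edgeSet}
    (hs : IsIndepSet G.lineGraph ↑s) : 2 * #s ≤ Fintype.card V := by
  classical
  have hdisj : (s : Set G.edgeSet).PairwiseDisjoint fun e => (e : Sym2 V).toFinset := by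
    intro e he f hf hef
    refine Finset.disjoint_left.mpr fun v hve hvf => hs he hf hef ?_
    exact lineGraph_adj_iff_exists.mpr ⟨hef, v, Sym2.mem_toFinset.mp hve, Sym2.mem_toFinset.mp hvf⟩
  calc 2 * #s = ∑ e ∈ s, #(e : Sym2 V).toFinset := by
        rw [sum_congr rfl fun e _ => Sym2.card_toFinset_of_not_isDiag _
          (G.not_isDiag_of_mem_edgeSet e.2), sum_const, smul_eq_mul, mul_comm]
    _ = #(s.biUnion fun e => (e : Sym2 V).toFinset) := (card_biUnion hdisj).symm
    _ ≤ Fintype.card V := card_le_univ _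

lemma le_indepNumOn_lineGraph [Finite V] {m : ℕ} {f g : Fin m → V}
    (hfg : Injective (Sum.elim f g)) (hadj : ∀ i, G.Adj (f i) (g i)) {S : Set G.edgeSet}
    (hS : ∀ i, ⟨s(f i, g i), hadj i⟩ ∈ S) : m ≤ indepNumOn G.lineGraph S := by
  classical
  let e : Fin m → G.edgeSet := fun i => ⟨s(f i, g i), hadj i⟩
  have hdisj : ∀ i j v, v ∈ (e i : Sym2 V) → v ∈ (e j : Sym2 V) → i = j := by
    have hf : ∀ i j, f i = f j ↔ i = j := fun i j => (hfg.comp Sum.inl_injective).eq_iff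
    have hg : ∀ i j, g i = g j ↔ i = j := fun i j => (hfg.comp Sum.inr_injective).eq_iff
    have hfg' : ∀ i j, f i ≠ g j := fun i j h => Sum.inl_ne_inr (hfg h)
    intro i j v hvi hvj
    simp only [e, Sym2.mem_iff] at hvi hvj
    grind
  have he : Injective e := fun i j hij =>
    hdisj i j (f i) (Sym2.mem_mk_left _ _) (hij ▸ Sym2.mem_mk_left _ _)
  calc m = #(univ.image e) := by rw [card_image_of_injective _ he, card_univ, Fintype.card_fin]
    _ ≤ _ := le_indepNumOn (by simpa [Set.subset_def] using hS) fun x hx y hy hxy hadj' => by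
        simp only [coe_image, coe_univ, Set.image_univ, Set.mem_range] at hx hy
        obtain ⟨i, rfl⟩ := hx
        obtain ⟨j, rfl⟩ := hy
        obtain ⟨-, v, hvi, hvj⟩ := lineGraph_adj_iff_exists.mp hadj'
        exact hxy (congrArg e (hdisj i j v hvi hvj))

end IndependenceNumber

namespace TreeDecomp

variable {G : SimpleGraph V} (D : TreeDecomp G)

lemma pathConvex_setOf_mem_bag (v : V) : PathConvex D.tree {x | v ∈ D.bag x} :=
  pathConvex_of_preconnected D.isTree.isAcyclic (D.bag_conn v).preconnected

lemma exists_bag_superset_of_isClique {s : Finset V} (hs : G.IsClique (s : Set V)) :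
    ∃ x, ↑s ⊆ D.bag x :=
  PathConvex.exists_forall_mem D.isTree.connected s (fun v _ => D.pathConvex_setOf_mem_bag v)
    fun v hv w hw => by
      obtain rfl | hvw := eq_or_ne v w
      · obtain ⟨x, hx⟩ := D.bag_vert v
        exact ⟨x, hx, hx⟩
      · exact D.bag_edge (hs hv hw hvw)

lemma indepNumOn_bag_le_alpha [Fintype V] (x : D.ι) : indepNumOn G (D.bag x) ≤ D.alpha :=
  le_csSup ⟨Fintype.card V, by rintro _ ⟨y, rfl⟩; exact indepNumOn_le_card _⟩ ⟨x, rfl⟩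

def single (G : SimpleGraph V) : TreeDecomp G where
  ι := Unit
  tree := ⊥
  isTree := .of_subsingleton
  bag _ := Set.univ
  bag_vert _ := ⟨(), trivial⟩
  bag_edge _ _ _ := ⟨(), trivial, trivial⟩
  bag_conn v := by
    have : Nonempty {x : Unit | v ∈ Set.univ} := ⟨⟨(), trivial⟩⟩
    exact IsTree.of_subsingleton.connected

lemma alpha_single : (single G).alpha = indepNum G := by
  simp [alpha, single, indepNum]

end TreeDecomp

lemma treeIndepNum_le_indepNum {G : SimpleGraph V} : treeIndepNum G ≤ indepNum G :=
  Nat.sInf_le ⟨_, TreeDecomp.alpha_single⟩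

lemma le_treeIndepNum {G : SimpleGraph V} {k : ℕ} (h : ∀ D : TreeDecomp G, k ≤ D.alpha) :
    k ≤ treeIndepNum G :=
  le_csInf ⟨_, TreeDecomp.single G, rfl⟩ (by rintro _ ⟨D, rfl⟩; exact h D)

lemma top_adj_of_injective_sumElim {κ : Type} {f g : κ → V} (hfg : Injective (Sum.elim f g))
    (i : κ) : (⊤ : SimpleGraph V).Adj (f i) (g i) :=
  fun h => Sum.inl_ne_inr (hfg h)

lemma isClique_lineGraph_setOf_mem (G : SimpleGraph V) (v : V) :
    G.lineGraph.IsClique {e : G.edgeSet | v ∈ (e : Sym2 V)} :=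
  fun _ he _ hf hef => lineGraph_adj_iff_exists.mpr ⟨hef, v, he, hf⟩

lemma exists_bag_disjoint_edges {n : ℕ} (D : TreeDecomp (⊤ : SimpleGraph (Fin n)).lineGraph)
    (hn : 2 ≤ n) :
    ∃ x, ∃ (f g : Fin (n / 2) → Fin n) (hfg : Injective (Sum.elim f g)),
      ∀ i, ⟨s(f i, g i), top_adj_of_injective_sumElim hfg i⟩ ∈ D.bag x := by
  classical
  have hstar : ∀ v : Fin n, ∃ y, ∀ e : (⊤ : SimpleGraph (Fin n)).edgeSet,
      v ∈ (e : Sym2 (Fin n)) → e ∈ D.bag y := fun v => by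
    obtain ⟨y, hy⟩ := D.exists_bag_superset_of_isClique (s := {e | v ∈ (e : Sym2 (Fin n))})
      (by simpa using isClique_lineGraph_setOf_mem _ v)
    exact ⟨y, fun e he => hy (by simpa using he)⟩
  choose pt hpt using hstar
  obtain ⟨t, ht⟩ := exists_forall_two_mul_card_sameSide_le D.isTree pt (by simpa using hn)
  obtain ⟨f, g, hfg, hsep⟩ := exists_pairing (sameSide D.tree t pt) (by simpa using ht)
  refine ⟨t, f, g, hfg, fun i => ?_⟩
  by_contra hnot
  exact hsep i <| Or.inr <| (D.pathConvex_setOf_mem_bag _).exists_walk_not_mem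
    D.isTree.connected (hpt _ _ (Sym2.mem_mk_left _ _)) (hpt _ _ (Sym2.mem_mk_right _ _)) hnot

theorem treeIndepNum_lineGraph_complete_general
    (n : ℕ) :
    treeIndepNum (SimpleGraph.lineGraph (⊤ : SimpleGraph (Fin n))) = n / 2 ∧
    indepNum (SimpleGraph.lineGraph (⊤ : SimpleGraph (Fin n))) = n / 2 := by
  have hα : indepNum (⊤ : SimpleGraph (Fin n)).lineGraph = n / 2 := by
    refine le_antisymm (indepNumOn_le fun s _ hs => ?_) ?_
    · have := two_mul_card_le_of_isIndepSet_lineGraph hs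
      rw [Fintype.card_fin] at this
      omega
    · exact le_indepNumOn_lineGraph (injective_sumElim_lowerHalf_upperHalf n)
        (top_adj_of_injective_sumElim (injective_sumElim_lowerHalf_upperHalf n))
        (S := Set.univ) fun _ => trivial
  refine ⟨le_antisymm (hα ▸ treeIndepNum_le_indepNum) (le_treeIndepNum fun D => ?_), hα⟩
  obtain hn | hn := lt_or_ge n 2
  · omega
  obtain ⟨x, f, g, hfg, hx⟩ := exists_bag_disjoint_edges D hn
  exact (le_indepNumOn_lineGraph hfg _ hx).trans (D.indepNumOn_bag_le_alpha x)

/-- For every positive integer `n`,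
`tree-α(L(K_n)) = α(L(K_n)) = ⌊n/2⌋`. -/
theorem treeIndepNum_lineGraph_complete
    (n : ℕ) (hn : 0 < n) :
    treeIndepNum (SimpleGraph.lineGraph (⊤ : SimpleGraph (Fin n))) = n / 2 ∧
    indepNum (SimpleGraph.lineGraph (⊤ : SimpleGraph (Fin n))) = n / 2 :=
  treeIndepNum_lineGraph_complete_general n

end PaperTIN
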